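/- The global function f_Y of the sand automaton Y is F-injective and P-injective: any two distinct finite configurations have distinct images under f_Y, and any two distinct periodic configurations have distinct images under f_Y. -/

import Mathlib

/-- The extended integers `ℤ ∪ {-∞, +∞}`. -/
abbrev EZ : Type := WithBot (WithTop ℤ)

/-- Embedding of `ℤ` into the extended integers. -/
def finVal (n : ℤ) : EZ := ((n : WithTop ℤ) : EZ)

/-- The integer value of a finite extended integer (`0` on `±∞`). -/
def valZ (x : EZ) : ℤ := WithBot.recBotCoe 0 (fun y => WithTop.recTopCoe 0 id y) x

/-- The measuring device `β_l^m`. -/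
noncomputable def beta (l : ℕ) (m : ℤ) (n : EZ) : EZ :=
  if finVal (m + (l : ℤ)) < n then ⊤
  else if n < finVal (m - (l : ℤ)) then ⊥
  else WithBot.map (WithTop.map (fun k => k - m)) n

/-- Reference height: the value of `x` if finite, `0` if `x = ±∞`. -/
def refH (x : EZ) : ℤ := if x = ⊥ ∨ x = ⊤ then 0 else valZ x

/-- One-dimensional sandpile configurations. -/
abbrev Config : Type := ℤ → EZ

/-- The neighborhood sequence `d_r^i(c)`: the `2r`-tuple of measured differences. -/
noncomputable def nbhd (r : ℕ) (c : Config) (i : ℤ) : Fin (2 * r) → EZ :=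
  fun j => beta r (refH (c i))
    (c (i + (if (j : ℕ) < r then ((j : ℕ) : ℤ) - (r : ℤ) else ((j : ℕ) : ℤ) - (r : ℤ) + 1)))

/-- The global function of the sand automaton of radius `r` with local rule `lam`. -/
noncomputable def globalF (r : ℕ) (lam : (Fin (2 * r) → EZ) → ℤ) (c : Config) : Config :=
  fun i => if c i = ⊥ ∨ c i = ⊤ then c i
    else finVal (valZ (c i) + lam (nbhd r c i))

/-- Finite configurations. -/
def FiniteConf (c : Config) : Prop := ∃ k : ℕ, ∀ i : ℤ, (k : ℤ) ≤ |i| → c i = finVal 0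

/-- Periodic configurations. -/
def PeriodicConf (c : Config) : Prop := ∃ p : ℤ, p ≠ 0 ∧ ∀ i : ℤ, c (i + p) = c i


/-- The local rule of the sand automaton `Y` (radius 2, arguments `(a,b,x,y)`):
returns `-1` on `(+∞,-,-,-)`, `(2,-,-,-)`, `(1,-,-,-)`, `(0,-,-,-)`, `(-1,-∞,-,-)`,
and `0` otherwise. -/
def lamY (v : Fin 4 → EZ) : ℤ :=
  if v 0 = ⊤ ∨ v 0 = finVal 2 ∨ v 0 = finVal 1 ∨ v 0 = finVal 0 then -1
  else if v 0 = finVal (-1) ∧ v 1 = ⊥ then -1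
  else 0

/-! If `f_Y c = f_Y c'` and `c i ≠ c' i`, the heights at `i` are finite and differ by one, say
`c i = m` and `c' i = m - 1`. Then the rule lowers the column of `c` and not that of `c'`, which
forces `c (i - 2) = m - 1` and `c' (i - 2) = m - 2`: the same situation two columns to the left.
So `c` contains the infinite staircase `c (i - 2k) = m - k`, which no finite and no periodic
configuration does. -/

section ExtendedIntegers

@[simp] lemma finVal_inj {a b : ℤ} : finVal a = finVal b ↔ a = b := by simp [finVal]

@[simp] lemma finVal_le_finVal {a b : ℤ} : finVal a ≤ finVal b ↔ a ≤ b := by simp [finVal]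

@[simp] lemma finVal_lt_finVal {a b : ℤ} : finVal a < finVal b ↔ a < b := by simp [finVal]

@[simp] lemma finVal_ne_bot (a : ℤ) : finVal a ≠ ⊥ := by simp [finVal]

@[simp] lemma finVal_ne_top (a : ℤ) : finVal a ≠ ⊤ := by simp [finVal]

@[simp] lemma bot_ne_finVal (a : ℤ) : ⊥ ≠ finVal a := (finVal_ne_bot a).symm

@[simp] lemma top_ne_finVal (a : ℤ) : ⊤ ≠ finVal a := (finVal_ne_top a).symm

@[simp] lemma valZ_finVal (a : ℤ) : valZ (finVal a) = a := rfl

@[simp] lemma refH_finVal (a : ℤ) : refH (finVal a) = a := by simp [refH]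

lemma eq_bot_or_eq_top_or_eq_finVal (x : EZ) : x = ⊥ ∨ x = ⊤ ∨ ∃ a, x = finVal a := by
  induction x using WithBot.recBotCoe with
  | bot => exact Or.inl rfl
  | coe y =>
    induction y using WithTop.recTopCoe with
    | top => exact Or.inr (Or.inl rfl)
    | coe a => exact Or.inr (Or.inr ⟨a, rfl⟩)

lemma exists_eq_finVal {x : EZ} (hb : x ≠ ⊥) (ht : x ≠ ⊤) : ∃ a, x = finVal a := by
  rcases eq_bot_or_eq_top_or_eq_finVal x with h | h | h
  exacts [absurd h hb, absurd h ht, h]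

end ExtendedIntegers

section Beta

@[simp] lemma beta_bot (l : ℕ) (m : ℤ) : beta l m ⊥ = ⊥ := by simp [beta]

@[simp] lemma beta_top (l : ℕ) (m : ℤ) : beta l m ⊤ = ⊤ := by simp [beta]

lemma beta_finVal (l : ℕ) (m t : ℤ) :
    beta l m (finVal t) = if m + l < t then ⊤ else if t < m - l then ⊥ else finVal (t - m) := by
  simp only [beta, finVal_lt_finVal]
  rfl

lemma eq_finVal_of_beta_eq_finVal {l : ℕ} {m k : ℤ} {x : EZ} (h : beta l m x = finVal k) :
    x = finVal (m + k) := by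
  rcases eq_bot_or_eq_top_or_eq_finVal x with rfl | rfl | ⟨t, rfl⟩
  · simp at h
  · simp at h
  rw [beta_finVal] at h
  split_ifs at h <;> simp at h
  simp only [finVal_inj]
  omega

lemma finVal_le_iff_beta_two (m : ℤ) (x : EZ) :
    finVal m ≤ x ↔ beta 2 m x = ⊤ ∨ beta 2 m x = finVal 2 ∨ beta 2 m x = finVal 1 ∨
      beta 2 m x = finVal 0 := by
  rcases eq_bot_or_eq_top_or_eq_finVal x with rfl | rfl | ⟨t, rfl⟩
  · simp
  · simp
  · rw [beta_finVal]
    split_ifs <;> simp <;> omega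

end Beta

section GlobalFunction

variable {r : ℕ} {lam : (Fin (2 * r) → EZ) → ℤ} {c : Config} {i : ℤ}

lemma globalF_of_eq_finVal {m : ℤ} (hc : c i = finVal m) :
    globalF r lam c i = finVal (m + lam (nbhd r c i)) := by
  simp [globalF, hc]

@[simp] lemma globalF_eq_bot_iff : globalF r lam c i = ⊥ ↔ c i = ⊥ := by
  unfold globalF
  split_ifs with h
  · rfl
  · simp only [finVal_ne_bot, false_iff]
    exact fun hb => h (Or.inl hb)

@[simp] lemma globalF_eq_top_iff : globalF r lam c i = ⊤ ↔ c i = ⊤ := by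
  unfold globalF
  split_ifs with h
  · rfl
  · simp only [finVal_ne_top, false_iff]
    exact fun ht => h (Or.inr ht)

variable {c' : Config}

lemma eq_bot_iff_of_globalF_eq (h : globalF r lam c i = globalF r lam c' i) :
    c i = ⊥ ↔ c' i = ⊥ := by
  rw [← globalF_eq_bot_iff (lam := lam), h, globalF_eq_bot_iff]

lemma eq_top_iff_of_globalF_eq (h : globalF r lam c i = globalF r lam c' i) :
    c i = ⊤ ↔ c' i = ⊤ := by
  rw [← globalF_eq_top_iff (lam := lam), h, globalF_eq_top_iff]

lemma exists_finVal_of_globalF_eq {m : ℤ} (h : globalF r lam c i = globalF r lam c' i)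
    (hc : c i = finVal m) :
    ∃ m', c' i = finVal m' ∧ m + lam (nbhd r c i) = m' + lam (nbhd r c' i) := by
  obtain ⟨m', hc'⟩ := exists_eq_finVal (x := c' i)
    (by rw [ne_eq, ← eq_bot_iff_of_globalF_eq h, hc]; simp)
    (by rw [ne_eq, ← eq_top_iff_of_globalF_eq h, hc]; simp)
  rw [globalF_of_eq_finVal hc, globalF_of_eq_finVal hc', finVal_inj] at h
  exact ⟨m', hc', h⟩

end GlobalFunction

def IsStaircase (c : Config) (i m : ℤ) : Prop := ∀ k : ℕ, c (i - 2 * k) = finVal (m - k)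

section Staircase

variable {c : Config}

lemma FiniteConf.not_isStaircase (hc : FiniteConf c) (i m : ℤ) : ¬ IsStaircase c i m := by
  intro hs
  obtain ⟨K, hK⟩ := hc
  have hzero : ∀ k : ℕ, K + i.natAbs ≤ k → m = k := fun k hk => by
    have h0 := (hs k).symm.trans (hK _ (by rw [Int.abs_eq_natAbs]; omega))
    rw [finVal_inj] at h0
    omega
  have := hzero (K + i.natAbs) le_rfl
  have := hzero (K + i.natAbs + 1) (by omega)
  omega

lemma PeriodicConf.not_isStaircase (hc : PeriodicConf c) (i m : ℤ) : ¬ IsStaircase c i m := by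
  intro hs
  obtain ⟨p, hp0, hp⟩ := hc
  have hperiod : c (i - 2 * (p.natAbs : ℕ)) = c i := by
    rw [← Int.sign_mul_self_eq_natAbs, ← mul_assoc]
    exact Function.Periodic.sub_int_mul_eq hp _
  have := (hs p.natAbs).symm.trans (hperiod.trans (by simpa using hs 0))
  rw [finVal_inj] at this
  omega

end Staircase

section AutomatonY

variable {c c' : Config} {i m : ℤ}

lemma lamY_eq_neg_one_or_zero (v : Fin 4 → EZ) : lamY v = -1 ∨ lamY v = 0 := by
  unfold lamY
  split_ifs <;> simp

lemma nbhd_two_zero (c : Config) (i : ℤ) :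
    nbhd 2 c i 0 = beta 2 (refH (c i)) (c (i - 2)) := by
  simp [nbhd, sub_eq_add_neg]

lemma finVal_sub_one_le_of_lamY_eq_neg_one (hc : c i = finVal m)
    (h : lamY (nbhd 2 c i) = -1) : finVal (m - 1) ≤ c (i - 2) := by
  simp only [lamY, nbhd_two_zero, hc, refH_finVal, ← finVal_le_iff_beta_two] at h
  split_ifs at h with hle hleft
  · exact le_trans (by simp) hle
  · rw [eq_finVal_of_beta_eq_finVal hleft.1]
    simp [sub_eq_add_neg]

lemma lt_finVal_of_lamY_eq_zero (hc : c i = finVal m) (h : lamY (nbhd 2 c i) = 0) :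
    c (i - 2) < finVal m := by
  simp only [lamY, nbhd_two_zero, hc, refH_finVal, ← finVal_le_iff_beta_two] at h
  split_ifs at h with hle
  exact not_le.mp hle

lemma abs_sub_le_one_of_globalF_lamY_eq {m' : ℤ}
    (h : globalF 2 lamY c = globalF 2 lamY c') (hc : c i = finVal m) (hc' : c' i = finVal m') :
    |m - m'| ≤ 1 := by
  obtain ⟨m'', hc'', e⟩ := exists_finVal_of_globalF_eq (congrFun h i) hc
  rw [hc', finVal_inj] at hc''
  subst hc''
  rw [abs_le]
  rcases lamY_eq_neg_one_or_zero (nbhd 2 c i) with h1 | h1 <;>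
    rcases lamY_eq_neg_one_or_zero (nbhd 2 c' i) with h2 | h2 <;> omega

lemma descend_of_globalF_lamY_eq (h : globalF 2 lamY c = globalF 2 lamY c')
    (hc : c i = finVal m) (hc' : c' i = finVal (m - 1)) :
    c (i - 2) = finVal (m - 1) ∧ c' (i - 2) = finVal (m - 2) := by
  have e := congrFun h i
  rw [globalF_of_eq_finVal hc, globalF_of_eq_finVal hc', finVal_inj] at e
  have hlam : lamY (nbhd 2 c i) = -1 ∧ lamY (nbhd 2 c' i) = 0 := by
    rcases lamY_eq_neg_one_or_zero (nbhd 2 c i) with h1 | h1 <;>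
      rcases lamY_eq_neg_one_or_zero (nbhd 2 c' i) with h2 | h2 <;> omega
  have hlow := finVal_sub_one_le_of_lamY_eq_neg_one hc hlam.1
  have hhigh := lt_finVal_of_lamY_eq_zero hc' hlam.2
  have hne_top : c (i - 2) ≠ ⊤ := fun ht => by
    rw [eq_top_iff_of_globalF_eq (congrFun h (i - 2))] at ht
    simp [ht] at hhigh
  obtain ⟨u, hu⟩ := exists_eq_finVal (ne_bot_of_le_ne_bot (finVal_ne_bot _) hlow) hne_top
  obtain ⟨u', hu', -⟩ := exists_finVal_of_globalF_eq (congrFun h (i - 2)) hu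
  have hclose := abs_sub_le_one_of_globalF_lamY_eq h hu hu'
  rw [hu, finVal_le_finVal] at hlow
  rw [hu', finVal_lt_finVal] at hhigh
  rw [hu, hu', finVal_inj, finVal_inj, abs_le] at *
  omega

lemma staircase_pair_of_globalF_lamY_eq (h : globalF 2 lamY c = globalF 2 lamY c')
    (hc : c i = finVal m) (hc' : c' i = finVal (m - 1)) (k : ℕ) :
    c (i - 2 * k) = finVal (m - k) ∧ c' (i - 2 * k) = finVal (m - 1 - k) := by
  induction k with
  | zero => simpa using ⟨hc, hc'⟩
  | succ k ih =>
    obtain ⟨h1, h2⟩ := descend_of_globalF_lamY_eq h ih.1 (by rw [ih.2]; ring_nf)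
    have hidx : i - 2 * ((k + 1 : ℕ) : ℤ) = i - 2 * k - 2 := by push_cast; ring
    rw [hidx, h1, h2]
    constructor <;> (push_cast; ring_nf)

lemma exists_isStaircase_of_globalF_lamY_eq_of_ne (h : globalF 2 lamY c = globalF 2 lamY c')
    (hne : c ≠ c') : ∃ i m : ℤ, IsStaircase c i m := by
  obtain ⟨i, hi⟩ := Function.ne_iff.mp hne
  have hi' := congrFun h i
  obtain ⟨m, hm⟩ := exists_eq_finVal
    (fun hb => hi (hb.trans ((eq_bot_iff_of_globalF_eq hi').mp hb).symm))
    (fun ht => hi (ht.trans ((eq_top_iff_of_globalF_eq hi').mp ht).symm))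
  obtain ⟨m', hm', -⟩ := exists_finVal_of_globalF_eq hi' hm
  have hclose := abs_sub_le_one_of_globalF_lamY_eq h hm hm'
  have hmm' : m ≠ m' := fun e => hi (by rw [hm, hm', e])
  rcases (by rw [abs_le] at hclose; omega : m' = m - 1 ∨ m = m' - 1) with e | e
  · exact ⟨i, m, fun k => (staircase_pair_of_globalF_lamY_eq h hm (e ▸ hm') k).1⟩
  · exact ⟨i, m, fun k => by
      simpa [e] using (staircase_pair_of_globalF_lamY_eq h.symm hm' (e ▸ hm) k).2⟩

end AutomatonY

/-- `f_Y` is `F`-injective and `P`-injective: distinct finite configurations have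
distinct images under `f_Y`, and distinct periodic configurations have distinct
images under `f_Y`. -/
theorem Y_F_and_P_injective :
    Set.InjOn (globalF 2 lamY) {c : Config | FiniteConf c} ∧
    Set.InjOn (globalF 2 lamY) {c : Config | PeriodicConf c} := by
  refine ⟨fun c hc c' _ h => ?_, fun c hc c' _ h => ?_⟩ <;>
  · by_contra hne
    obtain ⟨i, m, hs⟩ := exists_isStaircase_of_globalF_lamY_eq_of_ne h hne
    exact hc.not_isStaircase i m hs
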